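/- Consider the root system of type D_n (n ≥ 4): V = ℚⁿ with the standard inner product, Φ = {±(e_i − e_j), ±(e_i + e_j) : 1 ≤ i < j ≤ n}, base Δ = {e_1−e_2, …, e_{n−1}−e_n, e_{n−1}+e_n}, highest root e_1 + e_2. For every i with 1 < i < n−1, the simple root e_i − e_{i+1} is not W_{e_i−e_{i+1}}-conjugate to the highest root e_1 + e_2; equivalently, no w in the subgroup of the Weyl group generated by the simple reflections in Δ \ {e_i − e_{i+1}} satisfies w(e_i − e_{i+1}) = e_1 + e_2. -/
import Mathlib


open scoped BigOperators

/-- the `k`-th standard basis vector of `ℚⁿ` -/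
noncomputable def stdE {n : ℕ} (k : Fin n) : Fin n → ℚ := Pi.single k 1

/-- the standard dot product on `ℚⁿ`, as a bilinear form -/
noncomputable def dotForm (n : ℕ) : (Fin n → ℚ) →ₗ[ℚ] (Fin n → ℚ) →ₗ[ℚ] ℚ :=
  LinearMap.mk₂ ℚ (fun u v => ∑ i, u i * v i)
    (by intros m m' v; simp [add_mul, Finset.sum_add_distrib])
    (by intros c m v; simp [Finset.mul_sum, mul_assoc])
    (by intros m v v'; simp [mul_add, Finset.sum_add_distrib])
    (by intros c m v; simp [Finset.mul_sum]; ring_nf; simp [mul_comm, mul_left_comm])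

/-- the orthogonal reflection of `ℚⁿ` in the vector `γ` (junk value `id` when `γ = 0`) -/
noncomputable def sRefl {n : ℕ} (γ : Fin n → ℚ) : (Fin n → ℚ) ≃ₗ[ℚ] (Fin n → ℚ) :=
  if h : dotForm n γ γ ≠ 0 then
    Module.reflection (x := γ) (f := (2 / dotForm n γ γ) • dotForm n γ)
      (by simp only [LinearMap.smul_apply, smul_eq_mul]; field_simp)
  else LinearEquiv.refl ℚ _


/-- sum of the first `k+1` coordinates: our invariant linear functional -/
def fsum {n : ℕ} (k : ℕ) (v : Fin n → ℚ) : ℚ :=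
  ∑ i ∈ Finset.univ.filter (fun i : Fin n => i.val ≤ k), v i

lemma fsum_sub_smul {n : ℕ} (k : ℕ) (v γ : Fin n → ℚ) (c : ℚ) :
    fsum k (v - c • γ) = fsum k v - c * fsum k γ := by
  simp [fsum, Finset.sum_sub_distrib, Finset.mul_sum]

lemma fsum_single {n : ℕ} (k : ℕ) (a : Fin n) :
    fsum k (stdE a) = if a.val ≤ k then 1 else 0 := by
  simp [fsum, stdE, Finset.sum_pi_single']

lemma fsum_sRefl {n : ℕ} (k : ℕ) (γ : Fin n → ℚ) (hγ : fsum k γ = 0) (v : Fin n → ℚ) :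
    fsum k (sRefl γ v) = fsum k v := by
  rw [sRefl]
  split
  · rw [Module.reflection_apply]
    simp only [LinearMap.smul_apply, smul_eq_mul]
    rw [fsum_sub_smul, hγ, mul_zero, sub_zero]
  · rfl

/-- **Type `D_n` internal simple roots.** For `n ≥ 4` and an internal simple root
`α = e_k − e_{k+1}` (`0`-indexed: `1 ≤ k ≤ n − 3`) of the base
`Δ = {e_0−e_1, …, e_{n−2}−e_{n−1}, e_{n−2}+e_{n−1}}` of `D_n`, no element `w` of the
subgroup `W_α` generated by the simple reflections in `Δ \ {α}` satisfies
`w α = e_0 + e_1` (the highest root). -/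
theorem typeD_internal_not_leviConjugate_highestRoot
    (n : ℕ) (hn : 4 ≤ n) (k : ℕ) (hk1 : 1 ≤ k) (hk : k + 2 < n) :
    ¬ ∃ w ∈ Subgroup.closure
        ({g : (Fin n → ℚ) ≃ₗ[ℚ] (Fin n → ℚ) |
            ∃ j : ℕ, ∃ hj : j + 1 < n, j ≠ k ∧
              g = sRefl (stdE ⟨j, by omega⟩ - stdE ⟨j + 1, hj⟩)} ∪
          {sRefl (stdE ⟨n - 2, by omega⟩ + stdE ⟨n - 1, by omega⟩)}),
      w (stdE ⟨k, by omega⟩ - stdE ⟨k + 1, by omega⟩) =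
        stdE ⟨0, by omega⟩ + stdE ⟨1, by omega⟩ := by
  rintro ⟨w, hw, heq⟩
  have inv : ∀ v : Fin n → ℚ, fsum k (w v) = fsum k v := by
    refine Subgroup.closure_induction (p := fun g _ => ∀ v, fsum k (g v) = fsum k v)
      ?_ (by intro v; rfl) ?_ ?_ hw
    · rintro x (⟨j, hj, hjk, rfl⟩ | hx)
      · intro v
        refine fsum_sRefl _ _ ?_ v
        have : fsum k (stdE (⟨j, by omega⟩ : Fin n) - stdE ⟨j + 1, hj⟩) =
            fsum k (stdE (⟨j, by omega⟩ : Fin n)) - fsum k (stdE (⟨j + 1, hj⟩ : Fin n)) := by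
          simp [fsum, Finset.sum_sub_distrib]
        rw [this, fsum_single, fsum_single]
        simp only
        split_ifs <;> first | ring1 | (exfalso; omega)
      · simp only [Set.mem_singleton_iff] at hx
        subst hx
        intro v
        refine fsum_sRefl _ _ ?_ v
        have : fsum k (stdE (⟨n - 2, by omega⟩ : Fin n) + stdE ⟨n - 1, by omega⟩) =
            fsum k (stdE (⟨n - 2, by omega⟩ : Fin n)) + fsum k (stdE (⟨n - 1, by omega⟩ : Fin n)) := by
          simp [fsum, Finset.sum_add_distrib]
        rw [this, fsum_single, fsum_single]
        simp only
        split_ifs <;> first | ring1 | (exfalso; omega)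
    · intro x y _ _ hx hy v
      simpa [hy v] using hx (y v)
    · intro x _ hx v
      have h := hx (x⁻¹ v)
      have e : x (x⁻¹ v) = v := x.apply_symm_apply v
      rw [e] at h
      exact h.symm
  have h1 : fsum k (stdE (⟨k, by omega⟩ : Fin n) - stdE ⟨k + 1, by omega⟩) = 1 := by
    have : fsum k (stdE (⟨k, by omega⟩ : Fin n) - stdE ⟨k + 1, by omega⟩) =
        fsum k (stdE (⟨k, by omega⟩ : Fin n)) - fsum k (stdE (⟨k + 1, by omega⟩ : Fin n)) := by
      simp [fsum, Finset.sum_sub_distrib]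
    rw [this, fsum_single, fsum_single]
    simp only
    split_ifs <;> first | ring1 | (exfalso; omega)
  have h2 : fsum k (stdE (⟨0, by omega⟩ : Fin n) + stdE ⟨1, by omega⟩) = 2 := by
    have : fsum k (stdE (⟨0, by omega⟩ : Fin n) + stdE ⟨1, by omega⟩) =
        fsum k (stdE (⟨0, by omega⟩ : Fin n)) + fsum k (stdE (⟨1, by omega⟩ : Fin n)) := by
      simp [fsum, Finset.sum_add_distrib]
    rw [this, fsum_single, fsum_single]
    simp only
    split_ifs <;> first | ring1 | (exfalso; omega)
  have := inv (stdE (⟨k, by omega⟩ : Fin n) - stdE ⟨k + 1, by omega⟩)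
  rw [heq, h1, h2] at this
  norm_num at this
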